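/- Let x = (F ←γ G →μ F*, θ̄) and y = (F ←σ H →τ ψ̄) be ε-quadratic split preformations and π : G ↠ H a surjective homomorphism such that γ = σπ, μ = τπ, and θ̄ = ψ̄π. Then x is elementary if and only if y is elementary. -/

import Mathlib

/-- The dual `Hom_Λ(M, Λ)` of a left module over a ring with involution,
made into a left `Λ`-module via `(a • f) x = f x * star a`. -/
def SDual (Λ : Type) [Ring Λ] [StarRing Λ] (M : Type) [AddCommGroup M] [Module Λ M] : Type :=
  M →ₗ[Λ] Λ

namespace SDual

variable {Λ : Type} [Ring Λ] [StarRing Λ] {M N : Type} [AddCommGroup M] [Module Λ M]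
  [AddCommGroup N] [Module Λ N]

instance : AddCommGroup (SDual Λ M) := inferInstanceAs (AddCommGroup (M →ₗ[Λ] Λ))

instance : FunLike (SDual Λ M) M Λ where
  coe f := ⇑(show M →ₗ[Λ] Λ from f)
  coe_injective := fun f g h => by
    have : (show M →ₗ[Λ] Λ from f) = (show M →ₗ[Λ] Λ from g) := DFunLike.coe_injective h
    exact this

@[simp] theorem add_apply (f g : SDual Λ M) (x : M) : (f + g) x = f x + g x := rfl
@[simp] theorem zero_apply (x : M) : (0 : SDual Λ M) x = 0 := rfl
@[simp] theorem neg_apply (f : SDual Λ M) (x : M) : (-f) x = -(f x) := rfl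
@[simp] theorem sub_apply (f g : SDual Λ M) (x : M) : (f - g) x = f x - g x := rfl

@[simp] theorem map_add (f : SDual Λ M) (x y : M) : f (x + y) = f x + f y :=
  (show M →ₗ[Λ] Λ from f).map_add x y

@[simp] theorem map_smul (f : SDual Λ M) (a : Λ) (x : M) : f (a • x) = a * f x :=
  (show M →ₗ[Λ] Λ from f).map_smul a x

instance : SMul Λ (SDual Λ M) where
  smul a f := show M →ₗ[Λ] Λ from
    { toFun := fun x => f x * star a
      map_add' := fun x y => by simp [add_mul]
      map_smul' := fun c x => by simp [mul_assoc] }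

@[simp] theorem smul_apply (a : Λ) (f : SDual Λ M) (x : M) : (a • f) x = f x * star a := rfl

instance : Module Λ (SDual Λ M) where
  one_smul f := DFunLike.ext _ _ fun x => by simp
  mul_smul a b f := DFunLike.ext _ _ fun x => by simp [star_mul, mul_assoc]
  smul_zero a := DFunLike.ext _ _ fun x => by simp
  smul_add a f g := DFunLike.ext _ _ fun x => by simp [add_mul]
  add_smul a b f := DFunLike.ext _ _ fun x => by simp [star_add, mul_add]
  zero_smul f := DFunLike.ext _ _ fun x => by simp

/-- Build an element of `SDual Λ M` from a function. -/
def ofFun (g : M → Λ) (h1 : ∀ x y, g (x + y) = g x + g y)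
    (h2 : ∀ (a : Λ) (x : M), g (a • x) = a * g x) : SDual Λ M :=
  show M →ₗ[Λ] Λ from
    { toFun := g
      map_add' := h1
      map_smul' := fun a x => by simp [h2, smul_eq_mul] }

@[simp] theorem ofFun_apply (g : M → Λ) (h1 : ∀ x y, g (x + y) = g x + g y)
    (h2 : ∀ (a : Λ) (x : M), g (a • x) = a * g x) (x : M) : ofFun g h1 h2 x = g x := rfl

/-- The `ε`-twisted dual `T_ε θ` of a form `θ : M → M^*`:
`(T_ε θ) x y = ε * star (θ y x)`; for f.g. projective `M` this corresponds to
`εθ^*` under `M ≅ M^{**}`. -/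
def Tform (ε : Λ) (hc : ∀ a : Λ, ε * a = a * ε) (θ : M →ₗ[Λ] SDual Λ M) :
    M →ₗ[Λ] SDual Λ M where
  toFun x := ofFun (fun y => ε * star (θ y x))
    (fun y y' => by
      show ε * star (θ (y + y') x) = ε * star (θ y x) + ε * star (θ y' x)
      rw [_root_.map_add θ y y', add_apply, star_add, mul_add])
    (fun a y => by
      show ε * star (θ (a • y) x) = a * (ε * star (θ y x))
      rw [_root_.map_smul θ a y, smul_apply, star_mul, star_star, ← mul_assoc, hc a, mul_assoc])
  map_add' x x' := DFunLike.ext _ _ fun y => by simp [star_add, mul_add]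
  map_smul' a x := by
    simp only [RingHom.id_apply]
    exact DFunLike.ext _ _ fun y => by simp [star_mul, mul_assoc]

@[simp] theorem Tform_apply (ε : Λ) (hc : ∀ a : Λ, ε * a = a * ε) (θ : M →ₗ[Λ] SDual Λ M)
    (x y : M) : Tform ε hc θ x y = ε * star (θ y x) := rfl

end SDual

namespace SDual

variable {Λ : Type} [Ring Λ] [StarRing Λ] {M N : Type} [AddCommGroup M] [Module Λ M]
  [AddCommGroup N] [Module Λ N]

/-- The pullback (dual map) `u^* : M^* → N^*` along a linear map `u : N → M`,
given by `f ↦ f ∘ u`. -/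
def pullback (u : N →ₗ[Λ] M) : SDual Λ M →ₗ[Λ] SDual Λ N where
  toFun f := ofFun (fun x => f (u x)) (fun x y => by simp) (fun a x => by simp)
  map_add' f g := DFunLike.ext _ _ fun x => by simp
  map_smul' a f := by
    simp only [RingHom.id_apply]
    exact DFunLike.ext _ _ fun x => by simp

@[simp] theorem pullback_apply (u : N →ₗ[Λ] M) (f : SDual Λ M) (x : N) :
    pullback u f x = f (u x) := rfl

end SDual

/-- The additive subgroup `{b - ε * star b | b ∈ Λ}` of `Λ`. -/
def qSub (Λ : Type) [Ring Λ] [StarRing Λ] (ε : Λ) : AddSubgroup Λ :=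
  AddMonoidHom.range
    { toFun := fun b => b - ε * star b
      map_zero' := by simp
      map_add' := fun a b => by
        show a + b - ε * star (a + b) = (a - ε * star a) + (b - ε * star b)
        rw [star_add, mul_add]; abel }

/-- `Q_ε(Λ) = Λ / {b - ε * star b}`; in particular `QL Λ (-ε)` is `Q_{−ε}(Λ)`. -/
abbrev QL (Λ : Type) [Ring Λ] [StarRing Λ] (ε : Λ) : Type := Λ ⧸ qSub Λ ε

/-- Elementariness of an `ε`-quadratic split preformation `(F ←γ G →μ F*, θ̄)`
with respect to some f.g. free submodule `U ⊆ G`: the restriction of `θ̄` to `U`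
vanishes and the sequence `0 → U →(μ|U) F* →((γ|U)*) U* → 0` is exact. -/
def IsElementary (Λ : Type) [Ring Λ] [StarRing Λ] (ε : Λ)
    {F G : Type} [AddCommGroup F] [Module Λ F] [AddCommGroup G] [Module Λ G]
    (γ : G →ₗ[Λ] F) (μ : G →ₗ[Λ] SDual Λ F) (θb : G → QL Λ (-ε)) : Prop :=
  ∃ U : Submodule Λ G, Module.Free Λ U ∧ Module.Finite Λ U ∧
    (∀ u ∈ U, θb u = 0) ∧
    Function.Injective (μ.comp U.subtype) ∧
    LinearMap.range (μ.comp U.subtype) = LinearMap.ker (SDual.pullback (γ.comp U.subtype)) ∧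
    Function.Surjective (SDual.pullback (γ.comp U.subtype))


namespace SDual

variable {Λ : Type} [Ring Λ] [StarRing Λ] {F A B : Type} [AddCommGroup F] [Module Λ F]
  [AddCommGroup A] [Module Λ A] [AddCommGroup B] [Module Λ B]

theorem pullback_comp (u : B →ₗ[Λ] F) (e : A →ₗ[Λ] B) :
    pullback (u.comp e) = (pullback e).comp (pullback u) := by
  refine LinearMap.ext fun f => DFunLike.ext _ _ fun x => ?_
  rfl

theorem pullback_equiv_bijective (e : A ≃ₗ[Λ] B) :
    Function.Bijective (pullback (Λ := Λ) e.toLinearMap) := by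
  have hli : Function.LeftInverse (pullback (Λ := Λ) e.symm.toLinearMap)
      (pullback e.toLinearMap) := by
    intro f; exact DFunLike.ext _ _ fun x => by simp
  have hri : Function.RightInverse (pullback (Λ := Λ) e.symm.toLinearMap)
      (pullback e.toLinearMap) := by
    intro f; exact DFunLike.ext _ _ fun x => by simp
  exact ⟨hli.injective, hri.surjective⟩

/-- Transfer of the exactness conditions along a linear equivalence. -/
theorem transfer (e : A ≃ₗ[Λ] B) (a : B →ₗ[Λ] F) (b : B →ₗ[Λ] SDual Λ F)
    (h1 : Function.Injective (b.comp e.toLinearMap))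
    (h2 : LinearMap.range (b.comp e.toLinearMap)
        = LinearMap.ker (pullback (a.comp e.toLinearMap)))
    (h3 : Function.Surjective (pullback (a.comp e.toLinearMap))) :
    Function.Injective b ∧ LinearMap.range b = LinearMap.ker (pullback a) ∧
      Function.Surjective (pullback a) := by
  have hbij := pullback_equiv_bijective (Λ := Λ) e
  have hcomp : pullback (a.comp e.toLinearMap)
      = (pullback e.toLinearMap).comp (pullback a) := pullback_comp a e.toLinearMap
  refine ⟨?_, ?_, ?_⟩
  · intro x y hxy
    have : b.comp e.toLinearMap (e.symm x) = b.comp e.toLinearMap (e.symm y) := by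
      simp [LinearMap.comp_apply, hxy]
    have := h1 this
    simpa using congrArg e this
  · have hr : LinearMap.range (b.comp e.toLinearMap) = LinearMap.range b := by
      rw [LinearMap.range_comp, LinearEquiv.range, Submodule.map_top]
    have hk : LinearMap.ker (pullback (a.comp e.toLinearMap)) = LinearMap.ker (pullback a) := by
      rw [hcomp, LinearMap.ker_comp, LinearMap.ker_eq_bot.2 hbij.injective,
        Submodule.comap_bot]
    rw [← hr, h2, hk]
  · intro y
    obtain ⟨x, hx⟩ := h3 (pullback e.toLinearMap y)
    refine ⟨x, hbij.injective ?_⟩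
    rw [hcomp] at hx
    exact hx

end SDual

/-- Let `x = (F ←γ G →μ F*, θ̄)` and `y = (F ←σ H →τ F*, ψ̄)` be
`ε`-quadratic split preformations over a weakly finite ring `Λ` with involution,
and let `π : G ↠ H` be a surjective homomorphism with `γ = σπ`, `μ = τπ` and
`θ̄ = ψ̄π`.  Then `x` is elementary if and only if `y` is elementary. -/
theorem stmt_5 (Λ : Type) [Ring Λ] [StarRing Λ]
    (hwf : ∀ (k : ℕ) (a b : Matrix (Fin k) (Fin k) Λ), a * b = 1 → b * a = 1)
    (ε : Λ) (hε : ε = 1 ∨ ε = -1)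
    (F G H : Type) [AddCommGroup F] [Module Λ F] [Module.Free Λ F] [Module.Finite Λ F]
    [AddCommGroup G] [Module Λ G] [Module.Finite Λ G]
    [AddCommGroup H] [Module Λ H] [Module.Finite Λ H]
    (γ : G →ₗ[Λ] F) (μ : G →ₗ[Λ] SDual Λ F) (θb : G → QL Λ (-ε))
    (σ : H →ₗ[Λ] F) (τ : H →ₗ[Λ] SDual Λ F) (ψb : H → QL Λ (-ε))
    (hsymmx : ∀ g g' : G, μ g (γ g') = -(ε * star (μ g' (γ g))))
    (hsymmy : ∀ h h' : H, τ h (σ h') = -(ε * star (τ h' (σ h))))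
    (π : G →ₗ[Λ] H) (hπ : Function.Surjective π)
    (hγ : γ = σ.comp π) (hμ : μ = τ.comp π) (hθ : ∀ g : G, θb g = ψb (π g)) :
    IsElementary Λ ε γ μ θb ↔ IsElementary Λ ε σ τ ψb := by
  
  constructor
  · rintro ⟨U, hfree, hfin, hvan, hinj, hrng, hsurj⟩
    -- the restriction of π to U is injective, since μ = τ ∘ π is injective on U
    have hinjπ : Function.Injective (π.submoduleMap U) := by
      intro x y hxy
      apply hinj
      have hxy' : π (U.subtype x) = π (U.subtype y) := by
        have := congrArg Subtype.val hxy
        simpa [LinearMap.submoduleMap_coe_apply] using this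
      simp only [hμ, LinearMap.comp_apply]
      exact congrArg τ hxy'
    let e : U ≃ₗ[Λ] (U.map π) :=
      LinearEquiv.ofBijective (π.submoduleMap U) ⟨hinjπ, π.submoduleMap_surjective U⟩
    have hecoe : ∀ u : U, ((e u : H)) = π (u : G) := fun u => rfl
    have ha : (σ.comp (U.map π).subtype).comp e.toLinearMap = γ.comp U.subtype := by
      refine LinearMap.ext fun u => ?_
      simp [hγ, LinearMap.comp_apply, hecoe u]
    have hb : (τ.comp (U.map π).subtype).comp e.toLinearMap = μ.comp U.subtype := by
      refine LinearMap.ext fun u => ?_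
      simp [hμ, LinearMap.comp_apply, hecoe u]
    obtain ⟨c1, c2, c3⟩ := SDual.transfer e (σ.comp (U.map π).subtype)
      (τ.comp (U.map π).subtype) (by rw [hb]; exact hinj) (by rw [hb, ha]; exact hrng)
      (by rw [ha]; exact hsurj)
    refine ⟨U.map π, Module.Free.of_equiv e, Module.Finite.equiv e, ?_, c1, c2, c3⟩
    · rintro v ⟨u, hu, rfl⟩
      rw [← hθ u]
      exact hvan u hu
  · rintro ⟨V, hfree, hfin, hvan, hinj, hrng, hsurj⟩
    haveI := hfree
    haveI : Module.Projective Λ V := inferInstance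
    obtain ⟨s, hs⟩ := Module.projective_lifting_property π V.subtype hπ
    have hsap : ∀ v : V, π (s v) = (v : H) := fun v => congrFun (congrArg DFunLike.coe hs) v
    have sinj : Function.Injective s := by
      intro x y hxy
      have : (x : H) = (y : H) := by rw [← hsap x, ← hsap y, hxy]
      exact Subtype.ext this
    let e : V ≃ₗ[Λ] (LinearMap.range s) := LinearEquiv.ofInjective s sinj
    have hecoe : ∀ v : V, ((e v : G)) = s v := fun v => rfl
    have ha : (γ.comp (LinearMap.range s).subtype).comp e.toLinearMap = σ.comp V.subtype := by
      refine LinearMap.ext fun v => ?_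
      simp [hγ, LinearMap.comp_apply, hecoe v, hsap v]
    have hb : (μ.comp (LinearMap.range s).subtype).comp e.toLinearMap = τ.comp V.subtype := by
      refine LinearMap.ext fun v => ?_
      simp [hμ, LinearMap.comp_apply, hecoe v, hsap v]
    obtain ⟨c1, c2, c3⟩ := SDual.transfer e (γ.comp (LinearMap.range s).subtype)
      (μ.comp (LinearMap.range s).subtype) (by rw [hb]; exact hinj) (by rw [hb, ha]; exact hrng)
      (by rw [ha]; exact hsurj)
    refine ⟨LinearMap.range s, Module.Free.of_equiv e, Module.Finite.equiv e, ?_, c1, c2, c3⟩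
    · rintro u ⟨v, rfl⟩
      rw [hθ (s v), hsap v]
      exact hvan v v.2
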